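/- arXiv:1509.08051 — 4 statements merged into one kernel-verified Lean document; each statement's English description precedes it below -/
import Mathlib

section
/- If $K$ is an algebraically closed field and $R_1$, $R_2$ are commutative $K$-algebras that are integral domains, then $R_1 \otimes_K R_2$ is an integral domain. -/
open scoped TensorProduct

/-! If `xy = 0` in `R₁ ⊗[K] R₂`, flatness lets us replace `R₁` by a finitely generated subalgebra
`A` containing the coefficients of `x` and `y` in an `A`-basis `1 ⊗ bᵢ` coming from a `K`-basis of
`R₂`. For every `K`-point `φ` of `A`, `(φ ⊗ 1) x · (φ ⊗ 1) y = 0` in the domain `R₂`, so `φ` kills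
every coefficient of `x` or every coefficient of `y`. Thus the product of a nonzero coefficient of
`x` with one of `y` lies in every maximal ideal of `A` (Nullstellensatz), hence in the nilradical
(`A` is Jacobson), so it is `0`, contradicting that `A` is a domain. -/

section Nullstellensatz

variable {K A : Type*} [Field K] [IsAlgClosed K] [CommRing A] [Algebra K A]
  [Algebra.FiniteType K A]

theorem exists_algHom_ker_eq_of_isMaximal (m : Ideal A) [m.IsMaximal] :
    ∃ φ : A →ₐ[K] K, RingHom.ker φ = m := by
  let : Field (A ⧸ m) := Ideal.Quotient.field m
  have : Algebra.FiniteType K (A ⧸ m) :=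
    .of_surjective (Ideal.Quotient.mkₐ K m) (Ideal.Quotient.mkₐ_surjective K m)
  have : Module.Finite K (A ⧸ m) := finite_of_finite_type_of_isJacobsonRing K (A ⧸ m)
  refine ⟨(IsAlgClosed.lift : A ⧸ m →ₐ[K] K).comp (Ideal.Quotient.mkₐ K m), ?_⟩
  exact (RingHom.ker_comp_of_injective _ (RingHom.injective _)).trans Ideal.mk_ker

theorem eq_zero_of_forall_algHom_apply_eq_zero [IsReduced A] {a : A}
    (h : ∀ φ : A →ₐ[K] K, φ a = 0) : a = 0 := by
  have : IsJacobsonRing A := isJacobsonRing_of_finiteType (A := K)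
  suffices a ∈ (⊥ : Ideal A).jacobson by
    rwa [← Ideal.radical_eq_jacobson, Ideal.radical_bot_of_isReduced] at this
  refine Ideal.mem_sInf.mpr fun m ⟨_, hm⟩ => ?_
  obtain ⟨φ, rfl⟩ := exists_algHom_ker_eq_of_isMaximal (K := K) m
  exact h φ

end Nullstellensatz

namespace Algebra.TensorProduct

section CommRing

variable {R A M ι : Type*} [CommRing R] [CommRing A] [Algebra R A] [CommRing M] [Algebra R M]

theorem basis_repr_productMap (b : Module.Basis ι R M) (φ : A →ₐ[R] R) (z : A ⊗[R] M) (i : ι) :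
    b.repr (productMap ((Algebra.ofId R M).comp φ) (AlgHom.id R M) z) i =
      φ ((basis A b).repr z i) := by
  induction z using TensorProduct.induction_on with
  | zero => simp
  | tmul a m => simp [productMap_apply_tmul, ← Algebra.smul_def]
  | add z w hz hw => simp [hz, hw]

theorem range_map_val_mono {S T : Subalgebra R A} (h : S ≤ T) :
    (map S.val (AlgHom.id R M)).range ≤ (map T.val (AlgHom.id R M)).range := by
  rw [← Subalgebra.val_comp_inclusion h, ← (AlgHom.id R M).comp_id, map_comp]
  exact AlgHom.range_comp_le_range _ _

theorem exists_fg_mem_range_map_val (x : A ⊗[R] M) :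
    ∃ S : Subalgebra R A, S.FG ∧ x ∈ (map S.val (AlgHom.id R M)).range := by
  induction x using TensorProduct.induction_on with
  | zero => exact ⟨⊥, Subalgebra.fg_bot, zero_mem _⟩
  | tmul a m =>
    refine ⟨Algebra.adjoin R {a}, by simpa using Subalgebra.fg_adjoin_finset {a}, ?_⟩
    exact ⟨⟨a, Algebra.self_mem_adjoin_singleton R a⟩ ⊗ₜ m, rfl⟩
  | add x y hx hy =>
    obtain ⟨S, hS, hxS⟩ := hx
    obtain ⟨T, hT, hyT⟩ := hy
    exact ⟨S ⊔ T, hS.sup hT,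
      add_mem (range_map_val_mono (T := S ⊔ T) le_sup_left hxS)
        (range_map_val_mono (T := S ⊔ T) le_sup_right hyT)⟩

end CommRing

theorem map_id_injective_of_injective {K A A' B : Type*} [Field K] [CommRing A] [Algebra K A]
    [CommRing A'] [Algebra K A'] [CommRing B] [Algebra K B] {f : A →ₐ[K] A'}
    (hf : Function.Injective f) : Function.Injective (map f (AlgHom.id K B)) :=
  Module.Flat.rTensor_preserves_injective_linearMap f.toLinearMap hf

section IsAlgClosed

variable {K : Type*} [Field K] [IsAlgClosed K]

theorem noZeroDivisors_of_finiteType_left (A B : Type*) [CommRing A] [IsDomain A] [Algebra K A]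
    [Algebra.FiniteType K A] [CommRing B] [IsDomain B] [Algebra K B] :
    NoZeroDivisors (A ⊗[K] B) := by
  refine ⟨fun {x y} hxy => ?_⟩
  by_contra! hne
  let b := Module.Basis.ofVectorSpace K B
  let 𝔅 := basis A b
  obtain ⟨i, hi⟩ := Finsupp.ne_iff.mp (𝔅.repr.map_ne_zero_iff.mpr hne.1)
  obtain ⟨j, hj⟩ := Finsupp.ne_iff.mp (𝔅.repr.map_ne_zero_iff.mpr hne.2)
  refine mul_ne_zero hi hj (eq_zero_of_forall_algHom_apply_eq_zero (K := K) fun φ => ?_)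
  let ψ := productMap ((Algebra.ofId K B).comp φ) (AlgHom.id K B)
  rw [map_mul, ← basis_repr_productMap b φ, ← basis_repr_productMap b φ]
  rcases mul_eq_zero.mp (show ψ x * ψ y = 0 by rw [← map_mul, hxy, map_zero]) with h | h
  · rw [h, map_zero, Finsupp.zero_apply, zero_mul]
  · rw [h, map_zero, Finsupp.zero_apply, mul_zero]

theorem noZeroDivisors_of_isAlgClosed (A B : Type*) [CommRing A] [IsDomain A] [Algebra K A]
    [CommRing B] [IsDomain B] [Algebra K B] : NoZeroDivisors (A ⊗[K] B) := by
  refine ⟨fun {x y} hxy => ?_⟩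
  obtain ⟨S, hS, hxS⟩ := exists_fg_mem_range_map_val (M := B) x
  obtain ⟨T, hT, hyT⟩ := exists_fg_mem_range_map_val (M := B) y
  have : Algebra.FiniteType K ↥(S ⊔ T) := (Subalgebra.fg_iff_finiteType _).mp (hS.sup hT)
  have := noZeroDivisors_of_finiteType_left (K := K) ↥(S ⊔ T) B
  obtain ⟨x, rfl⟩ := range_map_val_mono (T := S ⊔ T) le_sup_left hxS
  obtain ⟨y, rfl⟩ := range_map_val_mono (T := S ⊔ T) le_sup_right hyT
  have hinj := map_id_injective_of_injective (B := B) (f := (S ⊔ T).val) Subtype.val_injective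
  rw [← map_mul, ← map_zero (map (S ⊔ T).val (AlgHom.id K B))] at hxy
  rcases mul_eq_zero.mp (hinj hxy) with rfl | rfl
  · exact .inl (map_zero _)
  · exact .inr (map_zero _)

end IsAlgClosed

end Algebra.TensorProduct

/-- If $K$ is an algebraically closed field and $R_1$, $R_2$ are commutative $K$-algebras
that are integral domains, then $R_1 \otimes_K R_2$ is an integral domain. -/
theorem stmt_0 (K R₁ R₂ : Type*) [Field K] [IsAlgClosed K]
    [CommRing R₁] [Algebra K R₁] [IsDomain R₁]
    [CommRing R₂] [Algebra K R₂] [IsDomain R₂] :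
    IsDomain (R₁ ⊗[K] R₂) := by
  have := Algebra.TensorProduct.noZeroDivisors_of_isAlgClosed (K := K) R₁ R₂
  have := Algebra.TensorProduct.nontrivial_of_algebraMap_injective_of_isDomain K R₁ R₂
    (algebraMap K R₁).injective (algebraMap K R₂).injective
  exact NoZeroDivisors.to_isDomain _
end

section
/- Let $\Lambda = KQ/\langle\text{paths of length } L+1\rangle$ be a truncated path algebra and $P$ a finitely generated projective left $\Lambda$-module. Then for any $0 \le l \le L$, the module $J^l P$ is a projective module over the truncated path algebra $\Lambda/J^{L+1-l}$. -/
universe uV uE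

/-- Paths of length at most `L` in a quiver, the canonical `K`-basis of the truncated
path algebra `KQ/⟨paths of length L+1⟩`. -/
abbrev PathLE (V : Type uV) [Quiver.{uE + 1} V] (L : ℕ) :=
  Σ a b : V, {p : Quiver.Path a b // p.length ≤ L}

/-- The Jacobson radical of a truncated path algebra: the ideal generated by (the classes
of) all paths of positive length. -/
def radJ {V : Type uV} [Quiver.{uE + 1} V] {L : ℕ} {K Λ : Type*} [Field K] [Ring Λ] [Algebra K Λ]
    (bas : Module.Basis (PathLE V L) K Λ) : Ideal Λ :=
  Ideal.span {x | ∃ (a b : V) (p : Quiver.Path a b) (hp : p.length ≤ L),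
    0 < p.length ∧ x = bas ⟨a, b, p, hp⟩}

/-!
A path of length `≥ l` factors uniquely as `q·t` with `q` of length `l`, and
`bas (q·t) = bas t * bas q`. So `J^l` is spanned by the `bas q`, `q` of length `l`, with
"coefficients" the tails `bas t`. Multiplying on the left by a path `s` turns `q·t` into `q·t·s`
or `0`, and the coefficient `bas t` into `bas s * bas t` up to a path of length `≥ L + 1 - l`.
Hence these coordinates are linear over `Λ/J^(L+1-l)`, and for `P` a retract of a free
`Λ`-module they exhibit `J^l P` as a retract of a free `Λ/J^(L+1-l)`-module.
-/

theorem Module.Projective.ideal_smul_top_of_coords {R ι : Type*} [Ring R] {c : RingCon R}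
    {I : Ideal R} [I.IsTwoSided] (g : ι → R) (hg : ∀ i, g i ∈ I) (u : R →+ (ι →₀ R))
    (hu_sum : ∀ x ∈ I, (u x).sum (fun i r => r * g i) = x)
    (hu_mul : ∀ a, ∀ x ∈ I, ∀ i, c (u (a * x) i) (a * u x i))
    {P : Type*} [AddCommGroup P] [Module R P] [Module.Projective R P]
    [Module c.Quotient (I • ⊤ : Submodule R P)]
    (hcompat : ∀ a (x : (I • ⊤ : Submodule R P)), c.mk' a • x = a • x) :
    Module.Projective c.Quotient (I • ⊤ : Submodule R P) := by
  obtain ⟨s, hs⟩ := Module.projective_def'.mp ‹Module.Projective R P›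
  have s_mem : ∀ m ∈ (I • ⊤ : Submodule R P), ∀ p, s m p ∈ I := by
    intro m hm
    refine Submodule.smul_induction_on hm (fun r hr p _ p' => ?_) (fun x y hx hy p => ?_)
    · rw [map_smul, Finsupp.smul_apply, smul_eq_mul]
      exact I.mul_mem_right _ hr
    · rw [map_add, Finsupp.add_apply]
      exact add_mem (hx p) (hy p)
  let ubar : R →+ (ι →₀ c.Quotient) :=
    (Finsupp.mapRange.addMonoidHom (c.mk' : R →+* c.Quotient).toAddMonoidHom).comp u
  have ubar_mul : ∀ a, ∀ x ∈ I, ubar (a * x) = c.mk' a • ubar x := by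
    intro a x hx
    ext i
    simp [ubar, (RingCon.eq c).mpr (hu_mul a x hx i)]
  let w : P → ι → (I • ⊤ : Submodule R P) := fun p i =>
    ⟨g i • p, Submodule.smul_mem_smul (hg i) Submodule.mem_top⟩
  have sum_w : ∀ x ∈ I, ∀ p,
      (Finsupp.linearCombination c.Quotient (w p) (ubar x) : P) = x • p := by
    intro x hx p
    calc (Finsupp.linearCombination c.Quotient (w p) (ubar x) : P)
        = ((u x).sum fun i r => c.mk' r • w p i : (I • ⊤ : Submodule R P)) :=
          congrArg Subtype.val <|
            Finsupp.sum_mapRange_index (hf := map_zero _) fun _ => zero_smul _ _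
      _ = (u x).sum fun i r => (r * g i) • p := by
          simp only [hcompat, Finsupp.sum, Submodule.coe_sum, Submodule.coe_smul, mul_smul, w]
      _ = x • p := by
          conv_rhs => rw [← hu_sum x hx]
          simp only [Finsupp.sum, Finset.sum_smul]
  let Φ : (I • ⊤ : Submodule R P) →ₗ[c.Quotient] (P →₀ ι →₀ c.Quotient) :=
    { toFun := fun m => (s m).mapRange ubar ubar.map_zero
      map_add' := fun m m' => by simp [Finsupp.mapRange_add]
      map_smul' := by
        intro a m
        obtain ⟨a, rfl⟩ := c.mk'_surjective a
        ext p : 1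
        rw [hcompat, RingHom.id_apply, Finsupp.smul_apply, Finsupp.mapRange_apply,
          Finsupp.mapRange_apply, ← ubar_mul a _ (s_mem m m.2 p), Submodule.coe_smul, map_smul]
        rfl }
  let Ψ : (P →₀ ι →₀ c.Quotient) →ₗ[c.Quotient] (I • ⊤ : Submodule R P) :=
    Finsupp.lsum ℕ fun p => Finsupp.linearCombination c.Quotient (w p)
  refine Module.Projective.of_split Φ Ψ (LinearMap.ext fun m => Subtype.ext ?_)
  calc ((Ψ (Φ m) : (I • ⊤ : Submodule R P)) : P)
      = (s m).sum fun p r => r • p := by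
        simp only [Φ, Ψ, LinearMap.coe_mk, AddHom.coe_mk, Finsupp.lsum_apply]
        rw [Finsupp.sum_mapRange_index (fun _ => map_zero _), Finsupp.sum, Finsupp.sum,
          Submodule.coe_sum]
        exact Finset.sum_congr rfl fun p _ => sum_w _ (s_mem m m.2 p) p
    _ = m := congr($hs m)

namespace Quiver.Path

variable {V : Type*} [Quiver V]

theorem sigma_eq_of_comp_eq {a b v w : V} {p₁ : Path a v} {p₂ : Path v b} {q₁ : Path a w}
    {q₂ : Path w b} (h : p₁.comp p₂ = q₁.comp q₂) (hl : p₁.length = q₁.length) :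
    (⟨v, p₁, p₂⟩ : Σ u, Path a u × Path u b) = ⟨w, q₁, q₂⟩ := by
  obtain rfl : v = w := by
    have hv := vertices_comp_get_length_eq p₁ p₂
    have hw := vertices_comp_get_length_eq q₁ q₂
    rw [← hv, ← hw]
    simp only [List.get_eq_getElem, h, hl]
  obtain ⟨rfl, rfl⟩ := (comp_inj' hl).mp h
  rfl

theorem exists_sigma_comp_eq {a b : V} (r : Path a b) {l : ℕ} (h : l ≤ r.length) :
    ∃ s : Σ m, Path a m × Path m b, s.2.1.comp s.2.2 = r ∧ s.2.1.length = l := by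
  obtain ⟨m, p₁, p₂, rfl, hl⟩ := r.exists_eq_comp_of_le_length h
  exact ⟨⟨m, p₁, p₂⟩, rfl, hl⟩

end Quiver.Path

section TruncatedPathAlgebra

open Quiver

variable {V : Type uV} [Quiver.{uE + 1} V] {L : ℕ} {K Λ : Type*} [Field K] [Ring Λ]
  [Algebra K Λ] (bas : Module.Basis (PathLE V L) K Λ)

def longPathSpan (k : ℕ) : Submodule K Λ :=
  Submodule.span K (bas '' {z | k ≤ z.2.2.1.length})

theorem longPathSpan_zero : longPathSpan bas 0 = ⊤ := by
  simp [longPathSpan, Set.image_univ, bas.span_eq]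

variable {bas}
  (hmul : ∀ (a b c : V) (p : Path a b) (q : Path b c) (hp : p.length ≤ L) (hq : q.length ≤ L),
    bas ⟨b, c, q, hq⟩ * bas ⟨a, b, p, hp⟩ =
      if h : p.length + q.length ≤ L then
        bas ⟨a, c, p.comp q, by rwa [Path.length_comp]⟩ else 0)
  (hmul0 : ∀ (a b b' c : V) (p : Path a b) (q : Path b' c) (hp : p.length ≤ L)
    (hq : q.length ≤ L), b ≠ b' → bas ⟨b', c, q, hq⟩ * bas ⟨a, b, p, hp⟩ = 0)

include hmul hmul0 in
theorem longPathSpan_mul_le (j k : ℕ) :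
    longPathSpan bas j * longPathSpan bas k ≤ longPathSpan bas (j + k) := by
  rw [longPathSpan, longPathSpan, Submodule.span_mul_span, Submodule.span_le]
  rintro _ ⟨_, ⟨⟨a, b, p, hp⟩, hj, rfl⟩, _, ⟨⟨a', b', q, hq⟩, hk, rfl⟩, rfl⟩
  dsimp only
  by_cases hb : b' = a
  · subst hb
    rw [hmul]
    split_ifs with h
    · refine Submodule.subset_span ⟨_, ?_, rfl⟩
      simp only [Set.mem_ofPred_eq, Path.length_comp] at *
      omega
    · exact zero_mem _
  · rw [hmul0 _ _ _ _ q p hq hp hb]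
    exact zero_mem _

include hmul hmul0 in
theorem radJ_le_longPathSpan_one {x : Λ} (hx : x ∈ radJ bas) : x ∈ longPathSpan bas 1 := by
  induction hx using Submodule.span_induction with
  | mem x hx =>
    obtain ⟨a, b, p, hp, h, rfl⟩ := hx
    exact Submodule.subset_span ⟨_, h, rfl⟩
  | zero => exact zero_mem _
  | add _ _ _ _ h₁ h₂ => exact add_mem h₁ h₂
  | smul a x _ h =>
    simpa using longPathSpan_mul_le hmul hmul0 0 1
      (Submodule.mul_mem_mul (longPathSpan_zero bas ▸ Submodule.mem_top (x := a)) h)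

include hmul in
theorem bas_mem_radJ_pow (k : ℕ) :
    ∀ z : PathLE V L, k ≤ z.2.2.1.length → bas z ∈ radJ bas ^ k := by
  induction k with
  | zero => simp only [Submodule.pow_zero, Ideal.one_eq_top, Submodule.mem_top, implies_true]
  | succ k ih =>
    rintro ⟨a, b, r, hr⟩ hk
    obtain ⟨m, e, q, hq, rfl⟩ :=
      r.eq_toPath_comp_of_length_eq_succ (n := r.length - 1) (by simp at hk ⊢; omega)
    have he : e.toPath.length ≤ L := by simp at hr ⊢; omega
    have hqL : q.length ≤ L := by simp at hr; omega
    have hfactor :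
        bas ⟨a, b, e.toPath.comp q, hr⟩ = bas ⟨m, b, q, hqL⟩ * bas ⟨a, m, e.toPath, he⟩ := by
      rw [hmul, dif_pos (by simpa using hr)]
    rw [hfactor, Submodule.pow_succ]
    exact Submodule.mul_mem_mul (ih _ (by simp at hk ⊢; omega))
      (Ideal.subset_span ⟨a, m, e.toPath, he, by simp, rfl⟩)

include hmul hmul0 in
theorem mem_radJ_pow_iff (k : ℕ) {x : Λ} : x ∈ radJ bas ^ k ↔ x ∈ longPathSpan bas k := by
  refine ⟨fun hx => ?_, fun hx => ?_⟩
  · induction k generalizing x with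
    | zero => simp [longPathSpan_zero]
    | succ k ih =>
      rw [Submodule.pow_succ] at hx
      refine Submodule.mul_induction_on hx (fun y hy z hz => ?_) fun _ _ => add_mem
      exact longPathSpan_mul_le hmul hmul0 k 1
        (Submodule.mul_mem_mul (ih hy) (radJ_le_longPathSpan_one hmul hmul0 hz))
  · refine (Submodule.span_le (p := (radJ bas ^ k).restrictScalars K)).mpr ?_ hx
    rintro _ ⟨z, hz, rfl⟩
    exact bas_mem_radJ_pow hmul k z hz

include hmul hmul0 in
theorem isTwoSided_radJ_pow (k : ℕ) : (radJ bas ^ k).IsTwoSided where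
  mul_mem_of_left b hx := by
    rw [mem_radJ_pow_iff hmul hmul0] at hx ⊢
    simpa using longPathSpan_mul_le hmul hmul0 k 0
      (Submodule.mul_mem_mul hx (longPathSpan_zero bas ▸ Submodule.mem_top (x := b)))

abbrev PathOfLength (V : Type uV) [Quiver.{uE + 1} V] (L l : ℕ) :=
  {z : PathLE V L // z.2.2.1.length = l}

variable (bas) in
noncomputable def prefixCoord (l : ℕ) : Λ →ₗ[K] (PathOfLength V L l →₀ Λ) :=
  bas.constr K fun z =>
    if H : l ≤ z.2.2.1.length then
      let s := Classical.choose (z.2.2.1.exists_sigma_comp_eq H)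
      have hs : s.2.1.comp s.2.2 = z.2.2.1 ∧ s.2.1.length = l :=
        Classical.choose_spec (z.2.2.1.exists_sigma_comp_eq H)
      have hlen : s.2.1.length + s.2.2.length ≤ L := by
        rw [← Path.length_comp, hs.1]; exact z.2.2.2
      Finsupp.single ⟨⟨z.1, s.1, s.2.1, by omega⟩, hs.2⟩
        (bas ⟨s.1, z.2.1, s.2.2, by omega⟩)
    else 0

variable (l : ℕ)

theorem prefixCoord_bas_comp {a m b : V} (q₁ : Path a m) (q₂ : Path m b)
    (h₁ : q₁.length = l) (h : (q₁.comp q₂).length ≤ L) :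
    prefixCoord bas l (bas ⟨a, b, q₁.comp q₂, h⟩) =
      Finsupp.single ⟨⟨a, m, q₁, by simp at h; omega⟩, h₁⟩
        (bas ⟨m, b, q₂, by simp at h; omega⟩) := by
  have H : l ≤ (q₁.comp q₂).length := by simp; omega
  rw [prefixCoord, Module.Basis.constr_basis, dif_pos H]
  obtain ⟨hs, hsl⟩ := Classical.choose_spec ((q₁.comp q₂).exists_sigma_comp_eq H)
  -- the chosen factorization occurs inside proof terms, so it is generalized before substituting
  have key : ∀ s : Σ u, Path a u × Path u b, s = ⟨m, q₁, q₂⟩ → ∀ h₁' h₂' h₃',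
      Finsupp.single (⟨⟨a, s.1, s.2.1, h₁'⟩, h₂'⟩ : PathOfLength V L l)
          (bas ⟨s.1, b, s.2.2, h₃'⟩) =
        Finsupp.single ⟨⟨a, m, q₁, by simp at h; omega⟩, h₁⟩
          (bas ⟨m, b, q₂, by simp at h; omega⟩) := by
    rintro _ rfl _ _ _
    rfl
  exact key _ (Path.sigma_eq_of_comp_eq hs (hsl.trans h₁.symm)) _ _ _

include hmul in
theorem prefixCoord_sum_mul {x : Λ} (hx : x ∈ longPathSpan bas l) :
    ((prefixCoord bas l x).sum fun q r => r * bas q.1) = x := by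
  refine LinearMap.eqOn_span' (R := K)
    (f := (Finsupp.lsum K fun q => LinearMap.mulRight K (bas q.1)) ∘ₗ prefixCoord bas l)
    (g := LinearMap.id) ?_ hx
  rintro _ ⟨⟨a, b, r, hr⟩, hl, rfl⟩
  obtain ⟨m, q₁, q₂, rfl, h₁⟩ := r.exists_eq_comp_of_le_length hl
  simp [prefixCoord_bas_comp l q₁ q₂ h₁, hmul, dif_pos (Path.length_comp q₁ q₂ ▸ hr)]

include hmul hmul0 in
theorem prefixCoord_bas_mul_sub_mem (t z : PathLE V L) (hz : l ≤ z.2.2.1.length)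
    (q : PathOfLength V L l) :
    prefixCoord bas l (bas t * bas z) q - (bas t • prefixCoord bas l (bas z)) q ∈
      radJ bas ^ (L + 1 - l) := by
  classical
  obtain ⟨a, b, r, hr⟩ := z
  obtain ⟨m, q₁, q₂, rfl, h₁⟩ := r.exists_eq_comp_of_le_length hz
  have hq₁ : q₁.length ≤ L := by simp at hr; omega
  have hq₂ : q₂.length ≤ L := by simp at hr; omega
  suffices ∃ y, prefixCoord bas l (bas t * bas ⟨a, b, q₁.comp q₂, hr⟩) =
      Finsupp.single ⟨⟨a, m, q₁, hq₁⟩, h₁⟩ y ∧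
      y - bas t * bas ⟨m, b, q₂, hq₂⟩ ∈ radJ bas ^ (L + 1 - l) by
    obtain ⟨y, hy, hmem⟩ := this
    rw [hy, prefixCoord_bas_comp l q₁ q₂ h₁, Finsupp.smul_single, smul_eq_mul,
      Finsupp.single_apply, Finsupp.single_apply]
    split_ifs
    · exact hmem
    · simp
  obtain ⟨a', c, s, hs⟩ := t
  by_cases hb : b = a'
  · subst hb
    rw [hmul]
    by_cases hlen : (q₁.comp q₂).length + s.length ≤ L
    · have hq₂s : (q₂.comp s).length ≤ L := by simp at hlen ⊢; omega
      refine ⟨bas ⟨m, c, q₂.comp s, hq₂s⟩, ?_, ?_⟩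
      · rw [dif_pos hlen]
        simp only [Path.comp_assoc]
        exact prefixCoord_bas_comp l q₁ (q₂.comp s) h₁ _
      · rw [hmul, dif_pos (by simpa using hq₂s), sub_self]
        exact zero_mem _
    · -- `q₁·q₂·s` vanishes, and `q₂·s` is either too long for `Λ` or lies in `J^(L+1-l)`
      refine ⟨0, by rw [dif_neg hlen, map_zero, Finsupp.single_zero], ?_⟩
      rw [zero_sub, neg_mem_iff, hmul]
      split_ifs with h
      · exact bas_mem_radJ_pow hmul _ _ (by simp at hlen ⊢; omega)
      · exact zero_mem _
  · refine ⟨0, by rw [hmul0 _ _ _ _ _ _ _ _ hb, map_zero, Finsupp.single_zero], ?_⟩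
    rw [hmul0 _ _ _ _ _ _ _ _ hb, sub_zero]
    exact zero_mem _

include hmul hmul0 in
theorem prefixCoord_mul_sub_mem (a : Λ) {x : Λ} (hx : x ∈ longPathSpan bas l)
    (q : PathOfLength V L l) :
    prefixCoord bas l (a * x) q - a * prefixCoord bas l x q ∈ radJ bas ^ (L + 1 - l) := by
  let u := prefixCoord bas l
  let D : Λ →ₗ[K] Λ →ₗ[K] (PathOfLength V L l →₀ Λ) :=
    LinearMap.mk₂ K (fun a x => u (a * x) - a • u x)
      (fun a₁ a₂ x => by simp only [add_mul, map_add, add_smul]; abel)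
      (fun k a x => by simp only [smul_mul_assoc, map_smul, smul_assoc, smul_sub])
      (fun a x₁ x₂ => by simp only [mul_add, map_add, smul_add]; abel)
      (fun k a x => by simp only [mul_smul_comm, map_smul, smul_comm a k, smul_sub])
  let N : Submodule K (PathOfLength V L l →₀ Λ) :=
    ⨅ q, ((radJ bas ^ (L + 1 - l)).restrictScalars K).comap (Finsupp.lapply q)
  have hD : D a x ∈ Submodule.map₂ D (Submodule.span K (Set.range bas)) (longPathSpan bas l) :=
    Submodule.apply_mem_map₂ D (by rw [bas.span_eq]; trivial) hx
  rw [longPathSpan, Submodule.map₂_span_span] at hD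
  have hDN : D a x ∈ N := by
    refine Submodule.span_le.mpr ?_ hD
    rintro _ ⟨_, ⟨t, rfl⟩, _, ⟨z, hz, rfl⟩, rfl⟩
    exact Submodule.mem_iInf _ |>.mpr fun q =>
      prefixCoord_bas_mul_sub_mem hmul hmul0 l t z hz q
  simpa [N, D, u] using Submodule.mem_iInf _ |>.mp hDN q

end TruncatedPathAlgebra

/-- Let $Λ = KQ/⟨\text{paths of length } L+1⟩$ be a truncated path algebra (presented by a
multiplicative basis of paths of length $≤ L$) and $P$ a finitely generated projective
left $Λ$-module.  Then for $0 ≤ l ≤ L$, the module $J^l P$ is projective over the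
truncated path algebra $Λ/J^{L+1-l}$ (realized as the quotient of $Λ$ by the ring
congruence identifying elements modulo $J^{L+1-l}$, with its induced action). -/
theorem stmt_9 {V : Type uV} [Quiver.{uE + 1} V] {L : ℕ}
    {K Λ : Type*} [Field K] [Ring Λ] [Algebra K Λ]
    (bas : Module.Basis (PathLE V L) K Λ)
    (hmul : ∀ (a b c : V) (p : Quiver.Path a b) (q : Quiver.Path b c)
        (hp : p.length ≤ L) (hq : q.length ≤ L),
      bas ⟨b, c, q, hq⟩ * bas ⟨a, b, p, hp⟩ =
        if h : p.length + q.length ≤ L then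
          bas ⟨a, c, p.comp q, by rwa [Quiver.Path.length_comp]⟩ else 0)
    (hmul0 : ∀ (a b b' c : V) (p : Quiver.Path a b) (q : Quiver.Path b' c)
        (hp : p.length ≤ L) (hq : q.length ≤ L), b ≠ b' →
      bas ⟨b', c, q, hq⟩ * bas ⟨a, b, p, hp⟩ = 0)
    (P : Type*) [AddCommGroup P] [Module Λ P]
    (hP : Module.Projective Λ P)
    (l : ℕ)
    (c : RingCon Λ) (hc : ∀ x y : Λ, c x y ↔ x - y ∈ (radJ bas) ^ (L + 1 - l))
    [inst : Module c.Quotient ↥((radJ bas) ^ l • ⊤ : Submodule Λ P)]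
    (hcompat : ∀ (a : Λ) (x : ↥((radJ bas) ^ l • ⊤ : Submodule Λ P)),
      (RingCon.mk' c a) • x = a • x) :
    Module.Projective c.Quotient ↥((radJ bas) ^ l • ⊤ : Submodule Λ P) := by
  have := isTwoSided_radJ_pow hmul hmul0 l
  have mem_longPathSpan {x : Λ} := (mem_radJ_pow_iff hmul hmul0 l (x := x)).mp
  exact Module.Projective.ideal_smul_top_of_coords (fun q : PathOfLength V L l => bas q.1)
    (fun q => bas_mem_radJ_pow hmul l q.1 q.2.ge) (prefixCoord bas l).toAddMonoidHom
    (fun x hx => prefixCoord_sum_mul hmul l (mem_longPathSpan hx))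
    (fun a x hx q => (hc _ _).mpr (prefixCoord_mul_sub_mem hmul hmul0 l a (mem_longPathSpan hx) q))
    hcompat
end

section
/- Let $\Lambda = KQ/\langle\text{paths of length } L+1\rangle$ be a truncated path algebra, $P$ a finitely generated projective left $\Lambda$-module, and $0 \le l \le L$. If $V, W$ are $KQ_0$-submodules of $J^lP$ with $J^lP = V \oplus W \oplus J^{l+1}P$, then $J^{l+1}P = (Q_1\cdot V) \oplus (Q_1\cdot W) \oplus J^{l+2}P$, where $Q_1\cdot U$ denotes the $K$-span of all $\alpha u$ with $\alpha$ an arrow and $u \in U$. -/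
universe uV uE

/-- For a subset `U` of a `Λ`-module `P`, the `K`-span `Q₁ · U` of all elements `α • u`
with `α` an arrow of the quiver and `u ∈ U`. -/
def arrowSpan {V : Type uV} [Quiver.{uE + 1} V] {L : ℕ} {K Λ : Type*} [Field K] [Ring Λ]
    [Algebra K Λ] (bas : Module.Basis (PathLE V L) K Λ) (h1 : 1 ≤ L)
    {P : Type*} [AddCommGroup P] [Module K P] [Module Λ P] (U : Set P) : Submodule K P :=
  Submodule.span K {y | ∃ (a b : V) (α : a ⟶ b) (u : P), u ∈ U ∧
    y = bas ⟨a, b, α.toPath, by simpa [Quiver.Hom.toPath] using h1⟩ • u}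

/-
`J^m` is the `K`-span of the paths of length at least `m`, and as `P` is a direct summand of a
free module, `x ∈ J^m P` exactly when every coordinate of `x` in that free module lies in `J^m`.

Every path of length `m + 1` is an arrow times a path of length `m`, so
`J^{l+1} P = Q₁ · J^l P = Q₁ · V + Q₁ · W + Q₁ · J^{l+1} P`, and `Q₁ · J^{l+1} P ⊆ J^{l+2} P`.

For directness, write an element of `Q₁ · V + Q₁ · W` as `∑_α α (v_α + w_α)` with `v_α ∈ V` and
`w_α ∈ W` fixed by the idempotent at the source of `α`. In each coordinate, the coefficient of
`p` followed by `α` (for `p` of length `l`) is the coefficient of `p` in `v_α + w_α`. So if the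
sum lies in `J^{l+2} P`, every `v_α + w_α` lies in `J^{l+1} P`, and
`J^l P = V ⊕ W ⊕ J^{l+1} P` forces `v_α = w_α = 0`.
-/

open Quiver

theorem Module.Basis.repr_mul_apply_of_forall_basis {ι R A : Type*} [CommSemiring R]
    [Semiring A] [Algebra R A] (b : Module.Basis ι R A) {x : A} {i i' : ι} {c : R}
    (h : ∀ j, b.repr (x * b j) i = Finsupp.single i' c j) (y : A) :
    b.repr (x * y) i = c * b.repr y i' := by
  have : Finsupp.lapply i ∘ₗ b.repr.toLinearMap ∘ₗ LinearMap.mulLeft R x =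
      c • (Finsupp.lapply i' ∘ₗ b.repr.toLinearMap) :=
    b.ext fun j => by classical simp [h, Finsupp.single_apply, eq_comm]
  simpa using LinearMap.congr_fun this y

theorem Submodule.disjoint_sup_and_disjoint_iff {R M : Type*} [Ring R] [AddCommGroup M]
    [Module R M] {V W Z : Submodule R M} :
    Disjoint V (W ⊔ Z) ∧ Disjoint W Z ↔ ∀ v ∈ V, ∀ w ∈ W, v + w ∈ Z → v = 0 ∧ w = 0 := by
  simp only [Submodule.disjoint_def]
  constructor
  · rintro ⟨hVWZ, hWZ⟩ v hv w hw hvw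
    obtain rfl : v = 0 :=
      hVWZ v hv (Submodule.mem_sup.2 ⟨-w, neg_mem hw, v + w, hvw, by abel⟩)
    exact ⟨rfl, hWZ w hw (by rwa [zero_add] at hvw)⟩
  · intro h
    refine ⟨fun v hv hvWZ => ?_, fun w hw hwZ => (h 0 (zero_mem _) w hw (by rwa [zero_add])).2⟩
    obtain ⟨w, hw, z, hz, rfl⟩ := Submodule.mem_sup.1 hvWZ
    exact (h _ hv (-w) (neg_mem hw) (by rwa [add_neg_cancel_comm])).1

theorem Ideal.mem_smul_top_iff_of_leftInverse {R P : Type*} [Ring R] [AddCommGroup P]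
    [Module R P] (I : Ideal R) [I.IsTwoSided] {s : P →ₗ[R] P →₀ R}
    (hs : Function.LeftInverse (Finsupp.linearCombination R id) s) {x : P} :
    x ∈ I • (⊤ : Submodule R P) ↔ ∀ z, s x z ∈ I := by
  refine ⟨fun hx => ?_, fun hx => ?_⟩
  · refine Submodule.smul_induction_on hx (fun r hr m _ z => ?_) (fun x y hx hy z => ?_)
    · rw [map_smul, Finsupp.smul_apply, smul_eq_mul]
      exact Ideal.IsTwoSided.mul_mem_of_left _ hr
    · rw [map_add, Finsupp.add_apply]
      exact add_mem (hx z) (hy z)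
  · rw [← hs x, Finsupp.linearCombination_apply]
    exact Submodule.sum_mem _ fun z _ => Submodule.smul_mem_smul (hx z) Submodule.mem_top

namespace PathLE

variable {Q : Type uV} [Quiver.{uE + 1} Q] {L : ℕ}

def length (i : PathLE Q L) : ℕ := i.2.2.1.length

lemma length_le (i : PathLE Q L) : i.length ≤ L := i.2.2.2

lemma cons_eq_cons_iff {a a' b b' c c' : Q} {p : Path a b} {p' : Path a' b'}
    {e : b ⟶ c} {e' : b' ⟶ c'} {h : (p.cons e).length ≤ L} {h' : (p'.cons e').length ≤ L}
    {hp : p.length ≤ L} {hp' : p'.length ≤ L} :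
    (⟨a, c, p.cons e, h⟩ : PathLE Q L) = ⟨a', c', p'.cons e', h'⟩ ↔
      (⟨a, b, p, hp⟩ : PathLE Q L) = ⟨a', b', p', hp'⟩ ∧ Total.mk b c e = Total.mk b' c' e' := by
  constructor
  · rintro ⟨⟩
    exact ⟨rfl, rfl⟩
  · rintro ⟨⟨⟩, ⟨⟩⟩
    rfl

end PathLE

namespace TruncatedPathAlgebra

variable {Q : Type uV} [Quiver.{uE + 1} Q] {L : ℕ} {K Λ : Type*} [Field K] [Ring Λ] [Algebra K Λ]
  (bas : Module.Basis (PathLE Q L) K Λ)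

def pathSpan (m : ℕ) : Submodule K Λ := Submodule.span K (bas '' {i | m ≤ i.length})

noncomputable def vertexIdem (v : Q) : Λ := bas ⟨v, v, Path.nil, Nat.zero_le L⟩

noncomputable def arrowElt (h1 : 1 ≤ L) {a b : Q} (e : a ⟶ b) : Λ :=
  bas ⟨a, b, e.toPath, (Path.length_toPath e).trans_le h1⟩

lemma mem_pathSpan_iff {m : ℕ} {x : Λ} :
    x ∈ pathSpan bas m ↔ ∀ i : PathLE Q L, i.length < m → bas.repr x i = 0 := by
  rw [pathSpan, Module.Basis.mem_span_image]
  refine forall_congr' fun i => ?_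
  rw [Finset.mem_coe, Finsupp.mem_support_iff, Set.mem_ofPred_eq, not_imp_comm, not_le]

lemma mem_pathSpan_zero (x : Λ) : x ∈ pathSpan bas 0 :=
  (mem_pathSpan_iff bas).2 fun _ h => absurd h (Nat.not_lt_zero _)

lemma pathSpan_anti {m m' : ℕ} (h : m ≤ m') : pathSpan bas m' ≤ pathSpan bas m :=
  Submodule.span_mono (Set.image_mono fun _ hi => le_trans h hi)

lemma pathSpan_eq_bot {m : ℕ} (h : L < m) : pathSpan bas m = ⊥ :=
  eq_bot_iff.2 fun x hx => (Submodule.mem_bot K).2 <| bas.repr.injective <| by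
    ext i
    exact ((mem_pathSpan_iff bas).1 hx i ((PathLE.length_le i).trans_lt h)).trans (by simp)

lemma arrowElt_mem_radJ (h1 : 1 ≤ L) {a b : Q} (e : a ⟶ b) : arrowElt bas h1 e ∈ radJ bas :=
  Ideal.subset_span ⟨a, b, e.toPath, _, Nat.one_pos, rfl⟩

variable (hmul : ∀ (a b c : Q) (p : Quiver.Path a b) (q : Quiver.Path b c)
      (hp : p.length ≤ L) (hq : q.length ≤ L),
    bas ⟨b, c, q, hq⟩ * bas ⟨a, b, p, hp⟩ =
      if h : p.length + q.length ≤ L then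
        bas ⟨a, c, p.comp q, by rwa [Quiver.Path.length_comp]⟩ else 0)
  (hmul0 : ∀ (a b b' c : Q) (p : Quiver.Path a b) (q : Quiver.Path b' c)
      (hp : p.length ≤ L) (hq : q.length ≤ L), b ≠ b' →
    bas ⟨b', c, q, hq⟩ * bas ⟨a, b, p, hp⟩ = 0)

include hmul hmul0 in
lemma basis_mul_basis_mem_pathSpan (i j : PathLE Q L) :
    bas j * bas i ∈ pathSpan bas (i.length + j.length) := by
  obtain ⟨a, b, p, hp⟩ := i
  obtain ⟨b', c, q, hq⟩ := j
  obtain rfl | hb := eq_or_ne b b'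
  · rw [hmul]
    split_ifs
    · exact Submodule.subset_span ⟨_, by simp [PathLE.length], rfl⟩
    · exact zero_mem _
  · rw [hmul0 _ _ _ _ _ _ _ _ hb]
    exact zero_mem _

include hmul hmul0 in
lemma mul_mem_pathSpan {m n : ℕ} {x y : Λ} (hx : x ∈ pathSpan bas m) (hy : y ∈ pathSpan bas n) :
    y * x ∈ pathSpan bas (m + n) := by
  induction hx using Submodule.span_induction with
  | mem x hx =>
    obtain ⟨i, hi, rfl⟩ := hx
    induction hy using Submodule.span_induction with
    | mem y hy =>
      obtain ⟨j, hj, rfl⟩ := hy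
      exact pathSpan_anti bas (add_le_add hi hj) (basis_mul_basis_mem_pathSpan bas hmul hmul0 i j)
    | zero => rw [zero_mul]; exact zero_mem _
    | add u v _ _ hu hv => rw [add_mul]; exact add_mem hu hv
    | smul c u _ hu => rw [smul_mul_assoc]; exact Submodule.smul_mem _ c hu
  | zero => rw [mul_zero]; exact zero_mem _
  | add u v _ _ hu hv => rw [mul_add]; exact add_mem hu hv
  | smul c u _ hu => rw [mul_smul_comm]; exact Submodule.smul_mem _ c hu

include hmul hmul0 in
lemma mem_radJ_iff {x : Λ} : x ∈ radJ bas ↔ x ∈ pathSpan bas 1 := by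
  refine ⟨fun hx => ?_, fun hx => ?_⟩
  · rw [radJ] at hx
    induction hx using Submodule.span_induction with
    | mem x hx =>
      obtain ⟨a, b, p, hp, hpos, rfl⟩ := hx
      exact Submodule.subset_span ⟨_, hpos, rfl⟩
    | zero => exact zero_mem _
    | add u v _ _ hu hv => exact add_mem hu hv
    | smul r u _ hu => simpa using mul_mem_pathSpan bas hmul hmul0 hu (mem_pathSpan_zero bas r)
  · induction hx using Submodule.span_induction with
    | mem x hx =>
      obtain ⟨⟨a, b, p, hp⟩, hpos, rfl⟩ := hx
      exact Ideal.subset_span ⟨a, b, p, hp, hpos, rfl⟩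
    | zero => exact zero_mem _
    | add u v _ _ hu hv => exact add_mem hu hv
    | smul c u _ hu => exact Submodule.smul_of_tower_mem _ c hu

include hmul hmul0 in
lemma isTwoSided_radJ : (radJ bas).IsTwoSided :=
  ⟨fun y hx => (mem_radJ_iff bas hmul hmul0).2 <| by
    simpa using mul_mem_pathSpan bas hmul hmul0 (mem_pathSpan_zero bas y)
      ((mem_radJ_iff bas hmul hmul0).1 hx)⟩

include hmul in
lemma arrowElt_mul_basis (h1 : 1 ≤ L) {a b c : Q} (e : b ⟶ c) (p : Path a b)
    (hp : p.length ≤ L) :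
    arrowElt bas h1 e * bas ⟨a, b, p, hp⟩ =
      if h : (p.cons e).length ≤ L then bas ⟨a, c, p.cons e, h⟩ else 0 := by
  rw [arrowElt, hmul]
  rfl

include hmul in
lemma exists_basis_eq_arrowElt_mul (h1 : 1 ≤ L) {n : ℕ} (i : PathLE Q L) (hi : n + 1 ≤ i.length) :
    ∃ (b c : Q) (e : b ⟶ c) (j : PathLE Q L),
      n ≤ j.length ∧ bas i = arrowElt bas h1 e * bas j := by
  obtain ⟨a, c, p, hp⟩ := i
  cases p with
  | nil => exact absurd hi (Nat.not_succ_le_zero n)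
  | cons p e =>
    refine ⟨_, c, e, ⟨a, _, p, (Nat.le_succ _).trans hp⟩, Nat.le_of_succ_le_succ hi, ?_⟩
    rw [arrowElt_mul_basis bas hmul, dif_pos hp]

include hmul hmul0 in
lemma mem_radJ_pow_iff {m : ℕ} {x : Λ} : x ∈ radJ bas ^ m ↔ x ∈ pathSpan bas m := by
  have := isTwoSided_radJ bas hmul hmul0
  induction m generalizing x with
  | zero => simp only [Submodule.pow_zero, Ideal.one_eq_top, Submodule.mem_top, mem_pathSpan_zero]
  | succ n ih =>
    rw [Ideal.IsTwoSided.pow_succ]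
    refine ⟨fun hx => ?_, fun hx => ?_⟩
    · refine Submodule.mul_induction_on hx (fun i hi j hj => ?_) (fun _ _ => add_mem)
      exact mul_mem_pathSpan bas hmul hmul0 (ih.1 hj) ((mem_radJ_iff bas hmul hmul0).1 hi)
    · induction hx using Submodule.span_induction with
      | mem x hx =>
        obtain ⟨i, hi, rfl⟩ := hx
        have h1 : 1 ≤ L := (Nat.le_add_left 1 n).trans (hi.trans (PathLE.length_le i))
        obtain ⟨b, c, e, j, hj, hij⟩ := exists_basis_eq_arrowElt_mul bas hmul h1 i hi
        rw [hij]
        exact Ideal.mul_mem_mul (arrowElt_mem_radJ bas h1 e)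
          (ih.2 (Submodule.subset_span ⟨j, hj, rfl⟩))
      | zero => exact zero_mem _
      | add u v _ _ hu hv => exact add_mem hu hv
      | smul c u _ hu => exact Submodule.smul_of_tower_mem _ c hu

include hmul hmul0 in
lemma radJ_pow_eq_bot {m : ℕ} (h : L < m) : radJ bas ^ m = ⊥ :=
  eq_bot_iff.2 fun _ hx => by
    simpa [pathSpan_eq_bot bas h] using (mem_radJ_pow_iff bas hmul hmul0).1 hx

include hmul hmul0 in
lemma eq_of_repr_arrowElt_mul_basis_ne_zero (h1 : 1 ≤ L) {a b c s t : Q} {p : Path a b}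
    {e : b ⟶ c} {h : (p.cons e).length ≤ L} {f : s ⟶ t} {j : PathLE Q L}
    (hne : bas.repr (arrowElt bas h1 f * bas j) ⟨a, c, p.cons e, h⟩ ≠ 0) :
    j = ⟨a, b, p, (Nat.le_succ _).trans h⟩ ∧ Total.mk s t f = Total.mk b c e := by
  obtain ⟨a', b', q, hq⟩ := j
  obtain rfl | hb := eq_or_ne b' s
  · rw [arrowElt_mul_basis bas hmul] at hne
    split_ifs at hne
    · rw [bas.repr_self] at hne
      exact PathLE.cons_eq_cons_iff.1 (Finsupp.single_apply_ne_zero.1 hne).1.symm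
    · simp at hne
  · rw [arrowElt, hmul0 _ _ _ _ _ _ _ _ hb] at hne
    simp at hne

include hmul hmul0 in
lemma repr_arrowElt_mul_cons (h1 : 1 ≤ L) {a b c : Q} (p : Path a b) (e : b ⟶ c)
    (h : (p.cons e).length ≤ L) (y : Λ) :
    bas.repr (arrowElt bas h1 e * y) ⟨a, c, p.cons e, h⟩ =
      bas.repr y ⟨a, b, p, (Nat.le_succ _).trans h⟩ := by
  refine (bas.repr_mul_apply_of_forall_basis (c := 1) (fun j => ?_) y).trans (one_mul _)
  by_cases hj : j = ⟨a, b, p, (Nat.le_succ _).trans h⟩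
  · rw [hj, arrowElt_mul_basis bas hmul, dif_pos h, bas.repr_self, Finsupp.single_eq_same,
      Finsupp.single_eq_same]
  · rw [Finsupp.single_eq_of_ne hj]
    by_contra hne
    exact hj (eq_of_repr_arrowElt_mul_basis_ne_zero bas hmul hmul0 h1 hne).1

include hmul hmul0 in
lemma repr_arrowElt_mul_cons_of_ne (h1 : 1 ≤ L) {a b c s t : Q} (p : Path a b) (e : b ⟶ c)
    (h : (p.cons e).length ≤ L) (f : s ⟶ t) (hf : Total.mk s t f ≠ Total.mk b c e) (y : Λ) :
    bas.repr (arrowElt bas h1 f * y) ⟨a, c, p.cons e, h⟩ = 0 := by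
  refine (bas.repr_mul_apply_of_forall_basis (c := 0) (i' := ⟨a, c, p.cons e, h⟩)
    (fun j => ?_) y).trans (zero_mul _)
  rw [Finsupp.single_zero, Finsupp.zero_apply]
  by_contra hne
  exact hf (eq_of_repr_arrowElt_mul_basis_ne_zero bas hmul hmul0 h1 hne).2

include hmul hmul0 in
lemma repr_vertexIdem_mul_of_ne {a b v : Q} (p : Path a b) (hp : p.length ≤ L) (hb : b ≠ v)
    (y : Λ) : bas.repr (vertexIdem bas v * y) ⟨a, b, p, hp⟩ = 0 := by
  refine (bas.repr_mul_apply_of_forall_basis (c := 0) (i' := ⟨a, b, p, hp⟩)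
    (fun j => ?_) y).trans (zero_mul _)
  rw [Finsupp.single_zero, Finsupp.zero_apply]
  obtain ⟨a', b', q, hq⟩ := j
  obtain rfl | hb' := eq_or_ne b' v
  · rw [vertexIdem, hmul a' b' b' q Path.nil hq (Nat.zero_le L), dif_pos (by simpa using hq),
      bas.repr_self]
    exact Finsupp.single_eq_of_ne' fun hj => hb (congrArg (·.2.1) hj).symm
  · rw [vertexIdem, hmul0 a' b' v v q Path.nil hq (Nat.zero_le L) hb', map_zero,
      Finsupp.zero_apply]

include hmul hmul0 in
lemma mem_radJ_pow_succ_of_sum_arrowElt_mul_mem (h1 : 1 ≤ L) {l : ℕ} (hl : l + 1 ≤ L)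
    (s : Finset (Total Q)) (μ : Total Q → Λ) (hμ : ∀ α ∈ s, μ α ∈ radJ bas ^ l)
    (hfix : ∀ α ∈ s, vertexIdem bas α.left * μ α = μ α)
    (hsum : ∑ α ∈ s, arrowElt bas h1 α.hom * μ α ∈ radJ bas ^ (l + 2)) (α : Total Q)
    (hα : α ∈ s) : μ α ∈ radJ bas ^ (l + 1) := by
  obtain ⟨b, c, e⟩ := α
  simp only [mem_radJ_pow_iff bas hmul hmul0, mem_pathSpan_iff] at hμ hsum ⊢
  rintro ⟨a, b', p, hp⟩ hlen
  obtain hlt | hpl : p.length < l ∨ p.length = l := by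
    change p.length < l + 1 at hlen
    omega
  · exact hμ _ hα _ hlt
  obtain rfl | hb := eq_or_ne b' b
  · have hcons : (p.cons e).length ≤ L := by rw [Path.length_cons]; omega
    have hcoeff := hsum ⟨a, c, p.cons e, hcons⟩ (by simp [PathLE.length, hpl])
    rw [map_sum, Finsupp.finsetSum_apply, Finset.sum_eq_single_of_mem _ hα] at hcoeff
    · rwa [repr_arrowElt_mul_cons bas hmul hmul0 h1] at hcoeff
    · exact fun β _ hβ => repr_arrowElt_mul_cons_of_ne bas hmul hmul0 h1 p e hcons β.hom hβ _
  · rw [← hfix _ hα]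
    exact repr_vertexIdem_mul_of_ne bas hmul hmul0 p hp hb _

include hmul in
lemma vertexIdem_mul_self (v : Q) : vertexIdem bas v * vertexIdem bas v = vertexIdem bas v := by
  rw [vertexIdem, hmul v v v Path.nil Path.nil (Nat.zero_le L) (Nat.zero_le L), dif_pos (by simp)]
  rfl

include hmul in
lemma arrowElt_mul_vertexIdem (h1 : 1 ≤ L) {a b : Q} (e : a ⟶ b) :
    arrowElt bas h1 e * vertexIdem bas a = arrowElt bas h1 e := by
  rw [vertexIdem, arrowElt_mul_basis bas hmul h1 e Path.nil (Nat.zero_le L)]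
  exact dif_pos h1

section Module

variable {P : Type*} [AddCommGroup P] [Module Λ P]

include hmul hmul0 in
lemma radJ_pow_succ_smul (n : ℕ) (N : Submodule Λ P) :
    radJ bas ^ (n + 1) • N = radJ bas • (radJ bas ^ n • N) := by
  have := isTwoSided_radJ bas hmul hmul0
  rw [Ideal.IsTwoSided.pow_succ, Submodule.mul_smul]

include hmul hmul0 in
lemma mem_radJ_pow_succ_smul_top_of_sum_arrowElt_smul_mem [Module.Projective Λ P] (h1 : 1 ≤ L)
    {l : ℕ} (hl : l + 1 ≤ L) (u : Total Q →₀ P)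
    (hu : ∀ α, u α ∈ (radJ bas ^ l • ⊤ : Submodule Λ P))
    (hfix : ∀ α, vertexIdem bas α.left • u α = u α)
    (hsum : (u.sum fun α m => arrowElt bas h1 α.hom • m) ∈ (radJ bas ^ (l + 2) • ⊤ : Submodule Λ P))
    (α : Total Q) : u α ∈ (radJ bas ^ (l + 1) • ⊤ : Submodule Λ P) := by
  obtain ⟨s, hs⟩ := Module.Projective.out (R := Λ) (P := P)
  have := isTwoSided_radJ bas hmul hmul0
  by_cases hα : α ∈ u.support
  swap
  · rw [Finsupp.notMem_support_iff.1 hα]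
    exact zero_mem _
  simp only [Ideal.mem_smul_top_iff_of_leftInverse _ hs] at hu hsum ⊢
  intro z
  refine mem_radJ_pow_succ_of_sum_arrowElt_mul_mem bas hmul hmul0 h1 hl u.support
    (fun β => s (u β) z) (fun β _ => hu β z) (fun β _ => ?_) ?_ α hα
  · rw [← smul_eq_mul, ← Finsupp.smul_apply, ← map_smul, hfix]
  · simpa [Finsupp.sum, map_sum, Finsupp.finsetSum_apply] using hsum z

variable [Module K P]

lemma arrowSpan_mono (h1 : 1 ≤ L) {U U' : Set P} (h : U ⊆ U') :
    arrowSpan bas h1 U ≤ arrowSpan bas h1 U' :=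
  Submodule.span_mono fun _ ⟨a, b, e, u, hu, hy⟩ => ⟨a, b, e, u, h hu, hy⟩

lemma arrowSpan_sup (h1 : 1 ≤ L) (A B : Submodule K P) :
    arrowSpan bas h1 (↑(A ⊔ B) : Set P) =
      arrowSpan bas h1 (A : Set P) ⊔ arrowSpan bas h1 (B : Set P) := by
  refine le_antisymm (Submodule.span_le.2 ?_)
    (sup_le (arrowSpan_mono bas h1 (SetLike.coe_mono le_sup_left))
      (arrowSpan_mono bas h1 (SetLike.coe_mono le_sup_right)))
  rintro _ ⟨a, b, e, u, hu, rfl⟩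
  obtain ⟨x, hx, y, hy, rfl⟩ := Submodule.mem_sup.1 hu
  rw [smul_add]
  exact add_mem (Submodule.mem_sup_left (Submodule.subset_span ⟨a, b, e, x, hx, rfl⟩))
    (Submodule.mem_sup_right (Submodule.subset_span ⟨a, b, e, y, hy, rfl⟩))

variable [IsScalarTower K Λ P]

include hmul in
lemma exists_finsupp_of_mem_arrowSpan (h1 : 1 ≤ L) {U : Submodule K P}
    (hU : ∀ v, ∀ x ∈ U, vertexIdem bas v • x ∈ U) {x : P}
    (hx : x ∈ arrowSpan bas h1 (U : Set P)) :
    ∃ u : Total Q →₀ P, (∀ α, u α ∈ U ∧ vertexIdem bas α.left • u α = u α) ∧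
      x = u.sum fun α m => arrowElt bas h1 α.hom • m := by
  classical
  induction hx using Submodule.span_induction with
  | mem y hy =>
    obtain ⟨a, b, e, m, hm, rfl⟩ := hy
    refine ⟨Finsupp.single ⟨a, b, e⟩ (vertexIdem bas a • m), fun α => ?_, ?_⟩
    · rw [Finsupp.single_apply]
      split_ifs with h
      · subst h
        exact ⟨hU _ _ hm, by rw [← mul_smul, vertexIdem_mul_self bas hmul]⟩
      · exact ⟨zero_mem _, smul_zero _⟩
    · rw [Finsupp.sum_single_index (by rw [smul_zero]), ← mul_smul,
        arrowElt_mul_vertexIdem bas hmul]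
      rfl
  | zero => exact ⟨0, fun _ => ⟨zero_mem _, smul_zero _⟩, by rw [Finsupp.sum_zero_index]⟩
  | add x y _ _ hx hy =>
    obtain ⟨u, hu, rfl⟩ := hx
    obtain ⟨u', hu', rfl⟩ := hy
    refine ⟨u + u', fun α => ⟨add_mem (hu α).1 (hu' α).1, ?_⟩, ?_⟩
    · rw [Finsupp.add_apply, smul_add, (hu α).2, (hu' α).2]
    · rw [Finsupp.sum_add_index' (fun _ => smul_zero _) (fun _ _ _ => smul_add _ _ _)]
  | smul c x _ hx =>
    obtain ⟨u, hu, rfl⟩ := hx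
    refine ⟨c • u, fun α => ⟨U.smul_mem c (hu α).1, ?_⟩, ?_⟩
    · rw [Finsupp.smul_apply, smul_comm, (hu α).2]
    · rw [Finsupp.sum_smul_index' (fun _ => smul_zero _), Finsupp.smul_sum]
      exact Finsupp.sum_congr fun _ _ => smul_comm _ _ _

lemma arrowSpan_le_radJ_smul (h1 : 1 ≤ L) (N : Submodule Λ P) :
    arrowSpan bas h1 (N : Set P) ≤ (radJ bas • N).restrictScalars K := by
  refine Submodule.span_le.2 ?_
  rintro _ ⟨a, b, e, u, hu, rfl⟩
  rw [SetLike.mem_coe, Submodule.restrictScalars_mem]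
  exact Submodule.smul_mem_smul (arrowElt_mem_radJ bas h1 e) hu

include hmul hmul0 in
lemma arrowSpan_radJ_pow_smul_top_le (h1 : 1 ≤ L) (n : ℕ) :
    arrowSpan bas h1 ((radJ bas ^ n • ⊤ : Submodule Λ P) : Set P) ≤
      (radJ bas ^ (n + 1) • ⊤ : Submodule Λ P).restrictScalars K := by
  rw [radJ_pow_succ_smul bas hmul hmul0]
  exact arrowSpan_le_radJ_smul bas h1 _

include hmul hmul0 in
lemma radJ_pow_succ_smul_top_le_arrowSpan (h1 : 1 ≤ L) (n : ℕ) :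
    (radJ bas ^ (n + 1) • ⊤ : Submodule Λ P).restrictScalars K ≤
      arrowSpan bas h1 ((radJ bas ^ n • ⊤ : Submodule Λ P) : Set P) := by
  intro x hx
  rw [Submodule.restrictScalars_mem] at hx
  refine Submodule.smul_induction_on hx (fun r hr m _ => ?_) (fun _ _ => add_mem)
  rw [mem_radJ_pow_iff bas hmul hmul0] at hr
  induction hr using Submodule.span_induction with
  | mem r hr =>
    obtain ⟨i, hi, rfl⟩ := hr
    obtain ⟨b, c, e, j, hj, hij⟩ := exists_basis_eq_arrowElt_mul bas hmul h1 i hi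
    rw [hij, mul_smul]
    have hj : bas j ∈ radJ bas ^ n :=
      (mem_radJ_pow_iff bas hmul hmul0).2 (Submodule.subset_span ⟨j, hj, rfl⟩)
    exact Submodule.subset_span
      ⟨b, c, e, _, Submodule.smul_mem_smul hj Submodule.mem_top, rfl⟩
  | zero => rw [zero_smul]; exact zero_mem _
  | add r r' _ _ hr hr' => rw [add_smul]; exact add_mem hr hr'
  | smul c r _ hr => rw [smul_assoc]; exact Submodule.smul_mem _ c hr

include hmul hmul0 in
lemma arrowSpan_sup_arrowSpan_sup_radJ_pow_smul_top_eq (h1 : 1 ≤ L) {l : ℕ}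
    {V W : Submodule K P}
    (hsup : V ⊔ W ⊔ (radJ bas ^ (l + 1) • ⊤ : Submodule Λ P).restrictScalars K =
      (radJ bas ^ l • ⊤ : Submodule Λ P).restrictScalars K) :
    arrowSpan bas h1 (V : Set P) ⊔ arrowSpan bas h1 (W : Set P) ⊔
        (radJ bas ^ (l + 2) • ⊤ : Submodule Λ P).restrictScalars K =
      (radJ bas ^ (l + 1) • ⊤ : Submodule Λ P).restrictScalars K := by
  have hsplit : arrowSpan bas h1 ((radJ bas ^ l • ⊤ : Submodule Λ P) : Set P) =
      arrowSpan bas h1 (V : Set P) ⊔ arrowSpan bas h1 (W : Set P) ⊔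
        arrowSpan bas h1 ((radJ bas ^ (l + 1) • ⊤ : Submodule Λ P) : Set P) := by
    rw [← Submodule.coe_restrictScalars K, ← hsup, arrowSpan_sup, arrowSpan_sup,
      Submodule.coe_restrictScalars]
  have hle := arrowSpan_radJ_pow_smul_top_le bas hmul hmul0 h1 (P := P) l
  refine le_antisymm (sup_le (sup_le ?_ ?_) ?_) ?_
  · exact le_sup_left.trans (le_sup_left.trans (hsplit.symm ▸ hle))
  · exact le_sup_right.trans (le_sup_left.trans (hsplit.symm ▸ hle))
  · exact Submodule.restrictScalars_mono K
      (Submodule.smul_mono_left (Ideal.pow_le_pow_right (Nat.le_succ _)))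
  · calc _ ≤ _ := radJ_pow_succ_smul_top_le_arrowSpan bas hmul hmul0 h1 l
      _ = _ := hsplit
      _ ≤ _ := sup_le_sup_left (arrowSpan_radJ_pow_smul_top_le bas hmul hmul0 h1 (l + 1)) _

include hmul hmul0 in
lemma disjoint_arrowSpan_of_disjoint [Module.Projective Λ P] (h1 : 1 ≤ L) {l : ℕ}
    {V W : Submodule K P} (hV : ∀ v, ∀ x ∈ V, vertexIdem bas v • x ∈ V)
    (hW : ∀ v, ∀ x ∈ W, vertexIdem bas v • x ∈ W)
    (hVle : V ≤ (radJ bas ^ l • ⊤ : Submodule Λ P).restrictScalars K)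
    (hWle : W ≤ (radJ bas ^ l • ⊤ : Submodule Λ P).restrictScalars K)
    (hdisj : Disjoint V (W ⊔ (radJ bas ^ (l + 1) • ⊤ : Submodule Λ P).restrictScalars K) ∧
      Disjoint W ((radJ bas ^ (l + 1) • ⊤ : Submodule Λ P).restrictScalars K)) :
    Disjoint (arrowSpan bas h1 (V : Set P))
        (arrowSpan bas h1 (W : Set P) ⊔
          (radJ bas ^ (l + 2) • ⊤ : Submodule Λ P).restrictScalars K) ∧
      Disjoint (arrowSpan bas h1 (W : Set P))
        ((radJ bas ^ (l + 2) • ⊤ : Submodule Λ P).restrictScalars K) := by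
  rw [Submodule.disjoint_sup_and_disjoint_iff] at hdisj ⊢
  intro x hx y hy hxy
  by_cases hl : l + 1 ≤ L
  · obtain ⟨v, hv, rfl⟩ := exists_finsupp_of_mem_arrowSpan bas hmul h1 hV hx
    obtain ⟨w, hw, rfl⟩ := exists_finsupp_of_mem_arrowSpan bas hmul h1 hW hy
    have hvw (α : Total Q) : v α + w α ∈ (radJ bas ^ (l + 1) • ⊤ : Submodule Λ P) := by
      refine mem_radJ_pow_succ_smul_top_of_sum_arrowElt_smul_mem bas hmul hmul0 h1 hl (v + w)
        (fun α => add_mem (hVle (hv α).1) (hWle (hw α).1)) (fun α => ?_) ?_ α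
      · rw [Finsupp.add_apply, smul_add, (hv α).2, (hw α).2]
      · rwa [Finsupp.sum_add_index' (fun _ => smul_zero _) (fun _ _ _ => smul_add _ _ _)]
    obtain rfl : v = 0 := Finsupp.ext fun α => (hdisj _ (hv α).1 _ (hw α).1 (hvw α)).1
    obtain rfl : w = 0 := Finsupp.ext fun α => (hdisj _ (hv α).1 _ (hw α).1 (hvw α)).2
    simp only [Finsupp.sum_zero_index, and_self]
  · have hbot : (radJ bas ^ (l + 1) • ⊤ : Submodule Λ P) = ⊥ := by
      rw [radJ_pow_eq_bot bas hmul hmul0 (by omega), Submodule.bot_smul]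
    have hzero {U : Submodule K P} (hU : U ≤ (radJ bas ^ l • ⊤ : Submodule Λ P).restrictScalars K)
        {z : P} (hz : z ∈ arrowSpan bas h1 (U : Set P)) : z = 0 := by
      have := arrowSpan_radJ_pow_smul_top_le bas hmul hmul0 h1 l (arrowSpan_mono bas h1 hU hz)
      rwa [Submodule.restrictScalars_mem, hbot, Submodule.mem_bot] at this
    exact ⟨hzero hVle hx, hzero hWle hy⟩

end Module

end TruncatedPathAlgebra

/-- Let $Λ = KQ/⟨\text{paths of length } L+1⟩$ be a truncated path algebra, $P$ a finitely
generated projective left $Λ$-module and $0 ≤ l ≤ L$.  If $V$, $W$ are $KQ_0$-submodules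
of $J^lP$ with $J^lP = V ⊕ W ⊕ J^{l+1}P$, then
$J^{l+1}P = (Q_1·V) ⊕ (Q_1·W) ⊕ J^{l+2}P$. -/
theorem stmt_10 {Vq : Type uV} [Quiver.{uE + 1} Vq] {L : ℕ} (h1 : 1 ≤ L)
    {K Λ : Type*} [Field K] [Ring Λ] [Algebra K Λ]
    (bas : Module.Basis (PathLE Vq L) K Λ)
    (hmul : ∀ (a b c : Vq) (p : Quiver.Path a b) (q : Quiver.Path b c)
        (hp : p.length ≤ L) (hq : q.length ≤ L),
      bas ⟨b, c, q, hq⟩ * bas ⟨a, b, p, hp⟩ =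
        if h : p.length + q.length ≤ L then
          bas ⟨a, c, p.comp q, by rwa [Quiver.Path.length_comp]⟩ else 0)
    (hmul0 : ∀ (a b b' c : Vq) (p : Quiver.Path a b) (q : Quiver.Path b' c)
        (hp : p.length ≤ L) (hq : q.length ≤ L), b ≠ b' →
      bas ⟨b', c, q, hq⟩ * bas ⟨a, b, p, hp⟩ = 0)
    (P : Type*) [AddCommGroup P] [Module K P] [Module Λ P] [IsScalarTower K Λ P]
    (hP : Module.Projective Λ P)
    (l : ℕ)
    (V' W' : Submodule K P)
    (hV'stab : ∀ (v : Vq), ∀ x ∈ V', bas ⟨v, v, Quiver.Path.nil, Nat.zero_le L⟩ • x ∈ V')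
    (hW'stab : ∀ (v : Vq), ∀ x ∈ W', bas ⟨v, v, Quiver.Path.nil, Nat.zero_le L⟩ • x ∈ W')
    (hVle : V' ≤ ((radJ bas ^ l • ⊤ : Submodule Λ P).restrictScalars K))
    (hWle : W' ≤ ((radJ bas ^ l • ⊤ : Submodule Λ P).restrictScalars K))
    (hsup : V' ⊔ W' ⊔ ((radJ bas ^ (l + 1) • ⊤ : Submodule Λ P).restrictScalars K) =
      ((radJ bas ^ l • ⊤ : Submodule Λ P).restrictScalars K))
    (hdisj₁ : Disjoint V'
      (W' ⊔ ((radJ bas ^ (l + 1) • ⊤ : Submodule Λ P).restrictScalars K)))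
    (hdisj₂ : Disjoint W' ((radJ bas ^ (l + 1) • ⊤ : Submodule Λ P).restrictScalars K)) :
    arrowSpan bas h1 (V' : Set P) ⊔ arrowSpan bas h1 (W' : Set P) ⊔
        ((radJ bas ^ (l + 2) • ⊤ : Submodule Λ P).restrictScalars K) =
      ((radJ bas ^ (l + 1) • ⊤ : Submodule Λ P).restrictScalars K) ∧
    Disjoint (arrowSpan bas h1 (V' : Set P)) (arrowSpan bas h1 (W' : Set P) ⊔
        ((radJ bas ^ (l + 2) • ⊤ : Submodule Λ P).restrictScalars K)) ∧
    Disjoint (arrowSpan bas h1 (W' : Set P))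
      ((radJ bas ^ (l + 2) • ⊤ : Submodule Λ P).restrictScalars K) :=
  ⟨TruncatedPathAlgebra.arrowSpan_sup_arrowSpan_sup_radJ_pow_smul_top_eq bas hmul hmul0 h1 hsup,
    TruncatedPathAlgebra.disjoint_arrowSpan_of_disjoint bas hmul hmul0 h1 hV'stab hW'stab hVle hWle
      ⟨hdisj₁, hdisj₂⟩⟩
end

section
/- Let $\Lambda$ be a finite dimensional algebra, $A$ and $B$ finite dimensional $\Lambda$-modules with $A$ local (i.e., $A/JA$ simple), and let $0 \to A \xrightarrow{f} G \xrightarrow{g} B \to 0$ be a short exact sequence such that the induced extension of $J^{\tau-1}B$ by $A/JA$ (obtained by pulling back along $J^{\tau-1}B \hookrightarrow B$ and pushing out along $A \to A/JA$) is non-split. Then $f(A) \subseteq J^\tau G$. -/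
/-!
Put `H = g⁻¹(J^{τ-1}B) = f(A) + J^{τ-1}G`, so that `JH = Jf(A) + J^τG`. The module `H/JH` is
semisimple, and the map `A/JA → H/JH` induced by `f` is zero or, `A/JA` being simple, a split
injection; a splitting would extend `A → A/JA` to `H`, which non-splitness excludes. Hence
`f(A) ⊆ Jf(A) + J^τG`, and Nakayama's lemma modulo `J^τG` gives `f(A) ⊆ J^τG`.
-/

open Submodule

theorem isSemisimpleModule_quotient_jacobson_smul_top (R M : Type*) [Ring R] [IsSemiprimaryRing R]
    [AddCommGroup M] [Module R M] :
    IsSemisimpleModule R (M ⧸ Ring.jacobson R • (⊤ : Submodule R M)) :=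
  (Module.isTorsionBySet_quotient_ideal_smul M _).isSemisimpleModule_iff.mp inferInstance

theorem Submodule.le_of_le_jacobson_smul_sup {R M : Type*} [Ring R] [AddCommGroup M] [Module R M]
    {N P : Submodule R M} (hN : N.FG) (h : N ≤ Ring.jacobson R • N ⊔ P) : N ≤ P := by
  have hmap : N.map P.mkQ = ⊥ := (hN.map _).eq_bot_of_le_jacobson_smul <|
    calc N.map P.mkQ ≤ (Ring.jacobson R • N ⊔ P).map P.mkQ := map_mono h
      _ = Ring.jacobson R • N.map P.mkQ := by rw [map_sup, map_smul'', mkQ_map_self, sup_bot_eq]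
  rwa [← LinearMap.le_ker_iff_map, ker_mkQ] at hmap

-- Over a noncommutative ring `Ideal R` is not a monoid: `I ^ n` is a `Submodule` power, for which
-- `pow_succ'` needs `n ≠ 0`.
theorem Ideal.smul_pow_smul {R M : Type*} [Ring R] [AddCommGroup M] [Module R M] (I : Ideal R)
    (n : ℕ) (N : Submodule R M) : I • I ^ n • N = I ^ (n + 1) • N := by
  rcases n with _ | n
  · rw [Submodule.pow_zero, Submodule.one_smul, Submodule.pow_one]
  · rw [Submodule.pow_succ' _ n.succ_ne_zero, Submodule.mul_smul]

theorem exists_comp_eq_mkQ_of_not_range_le_jacobson_smul_top {R A H : Type*} [Ring R]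
    [IsSemiprimaryRing R] [AddCommGroup A] [Module R A] [AddCommGroup H] [Module R H]
    [IsSimpleModule R (A ⧸ Ring.jacobson R • (⊤ : Submodule R A))]
    (i : A →ₗ[R] H) (hi : ¬ LinearMap.range i ≤ Ring.jacobson R • ⊤) :
    ∃ φ : H →ₗ[R] A ⧸ Ring.jacobson R • (⊤ : Submodule R A),
      φ ∘ₗ i = (Ring.jacobson R • ⊤ : Submodule R A).mkQ := by
  have := isSemisimpleModule_quotient_jacobson_smul_top R H
  let ibar := (Ring.jacobson R • ⊤ : Submodule R A).mapQ (Ring.jacobson R • ⊤) i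
    (smul_top_le_comap_smul_top _ i)
  have hinj : Function.Injective ibar := by
    refine (LinearMap.injective_or_eq_zero ibar).resolve_right fun h0 ↦ hi ?_
    rintro _ ⟨a, rfl⟩
    simpa [ibar] using LinearMap.congr_fun h0 (Submodule.Quotient.mk a)
  obtain ⟨ρ, hρ⟩ := IsSemisimpleModule.extension_property ibar hinj LinearMap.id
  exact ⟨ρ ∘ₗ mkQ _,
    LinearMap.ext fun a ↦ LinearMap.congr_fun hρ (Submodule.Quotient.mk a)⟩

theorem stmt_14_general {K Λ : Type*} [Field K] [Ring Λ] [Algebra K Λ] [FiniteDimensional K Λ]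
    {A G B : Type*}
    [AddCommGroup A] [Module K A] [Module Λ A] [IsScalarTower K Λ A] [FiniteDimensional K A]
    [AddCommGroup G] [Module Λ G]
    [AddCommGroup B] [Module Λ B]
    (J : Ideal Λ) (hJ : J = Ideal.jacobson ⊥) (τ : ℕ) (hτ : 1 ≤ τ)
    (hlocal : IsSimpleModule Λ (A ⧸ (J • ⊤ : Submodule Λ A)))
    (f : A →ₗ[Λ] G) (g : G →ₗ[Λ] B)
    (hg : Function.Surjective g)
    (hex : LinearMap.range f = LinearMap.ker g)
    (hnonsplit : ¬ ∃ φ : ↥(Submodule.comap g (J ^ (τ - 1) • ⊤ : Submodule Λ B)) →ₗ[Λ]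
        (A ⧸ (J • ⊤ : Submodule Λ A)),
      ∀ (a : A) (h : f a ∈ Submodule.comap g (J ^ (τ - 1) • ⊤ : Submodule Λ B)),
        φ ⟨f a, h⟩ = Submodule.Quotient.mk a) :
    LinearMap.range f ≤ (J ^ τ • ⊤ : Submodule Λ G) := by
  obtain rfl : J = Ring.jacobson Λ := hJ.trans Ideal.jacobson_bot
  have : IsArtinianRing Λ := isArtinian_of_tower K inferInstance
  have : Module.Finite Λ A := Module.Finite.of_restrictScalars_finite K Λ A
  set H := comap g (Ring.jacobson Λ ^ (τ - 1) • ⊤ : Submodule Λ B) with hHdef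
  have hH : H = LinearMap.range f ⊔ Ring.jacobson Λ ^ (τ - 1) • ⊤ := by
    rw [hHdef, ← LinearMap.range_eq_top.mpr hg, LinearMap.range_eq_map, ← map_smul'',
      comap_map_eq, hex, sup_comm]
  have hfH (a : A) : f a ∈ H := hH ▸ mem_sup_left (LinearMap.mem_range_self f a)
  have hfJH : LinearMap.range f ≤ Ring.jacobson Λ • H := by
    by_contra hle
    have hle' : ¬ LinearMap.range (f.codRestrict H hfH) ≤ Ring.jacobson Λ • ⊤ := fun h ↦
      hle <| by simpa only [← LinearMap.range_comp, map_smul'', map_subtype_top,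
        LinearMap.subtype_comp_codRestrict] using map_mono (f := H.subtype) h
    obtain ⟨φ, hφ⟩ := exists_comp_eq_mkQ_of_not_range_le_jacobson_smul_top _ hle'
    exact hnonsplit ⟨φ, fun a _ ↦ LinearMap.congr_fun hφ a⟩
  refine le_of_le_jacobson_smul_sup (LinearMap.range_eq_map f ▸ Module.Finite.fg_top.map f) ?_
  calc LinearMap.range f ≤ Ring.jacobson Λ • H := hfJH
    _ = _ := by rw [hH, smul_sup, Ideal.smul_pow_smul, Nat.sub_add_cancel hτ]

/-- Let $Λ$ be a finite dimensional algebra, $A$, $B$ finite dimensional modules with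
$A$ local (i.e. $A/JA$ simple), and $0 → A \xrightarrow{f} G \xrightarrow{g} B → 0$ a
short exact sequence such that the induced extension of $J^{τ-1} B$ by $A/JA$ (the
pullback along $J^{τ-1}B ↪ B$ pushed out along $A → A/JA$) is non-split; the latter is
expressed by saying that the canonical projection $A → A/JA$ does not extend to a
$Λ$-map $g^{-1}(J^{τ-1}B) → A/JA$.  Then $f(A) ⊆ J^τ G$. -/
theorem stmt_14 {K Λ : Type*} [Field K] [Ring Λ] [Algebra K Λ] [FiniteDimensional K Λ]
    {A G B : Type*}
    [AddCommGroup A] [Module K A] [Module Λ A] [IsScalarTower K Λ A] [FiniteDimensional K A]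
    [AddCommGroup G] [Module K G] [Module Λ G] [IsScalarTower K Λ G] [FiniteDimensional K G]
    [AddCommGroup B] [Module K B] [Module Λ B] [IsScalarTower K Λ B] [FiniteDimensional K B]
    (J : Ideal Λ) (hJ : J = Ideal.jacobson ⊥) (τ : ℕ) (hτ : 1 ≤ τ)
    (hlocal : IsSimpleModule Λ (A ⧸ (J • ⊤ : Submodule Λ A)))
    (f : A →ₗ[Λ] G) (g : G →ₗ[Λ] B)
    (hf : Function.Injective f) (hg : Function.Surjective g)
    (hex : LinearMap.range f = LinearMap.ker g)
    (hnonsplit : ¬ ∃ φ : ↥(Submodule.comap g (J ^ (τ - 1) • ⊤ : Submodule Λ B)) →ₗ[Λ]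
        (A ⧸ (J • ⊤ : Submodule Λ A)),
      ∀ (a : A) (h : f a ∈ Submodule.comap g (J ^ (τ - 1) • ⊤ : Submodule Λ B)),
        φ ⟨f a, h⟩ = Submodule.Quotient.mk a) :
    LinearMap.range f ≤ (J ^ τ • ⊤ : Submodule Λ G) :=
  stmt_14_general (K := K) J hJ τ hτ hlocal f g hg hex hnonsplit
end
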